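/- Let P be partitioned into clusters V₁, …, V_k with centers c₁, …, c_k of radius at most r*, and let σ*(p) denote the cluster center of p. Let C ⊆ P be a set whose points lie in pairwise distinct optimal clusters (σ* is injective on C). Let Y ⊆ P be a set whose points must lie in pairwise distinct clusters (σ* is injective on Y). Form the bipartite graph G(Y, C; E) with an edge between y ∈ Y and c ∈ C iff d(y, c) ≤ 2r*. If (Y', C') is a reverse dominating set of G (Y' ⊆ Y, C' = N_G(Y'), |C'| < |Y'|), then σ* is injective on the updated set (C \ C') ∪ Y', and |(C \ C') ∪ Y'| > |C|. In particular, |(C \ C') ∪ Y'| ≤ k. -/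
import Mathlib


/-- Augmenting a center set by a reverse dominating set: if the optimal
clustering assignment `σ` (to one of `k` clusters with centers `c` of radius
`r`) is injective on `C` and on `Y`, and `(Y', C')` is an RDS of the auxiliary
graph (edges = pairs at distance `≤ 2r`), then `σ` is injective on
`(C \ C') ∪ Y'`, this set is strictly larger than `C`, and its size is at most `k`. -/
theorem RDS_augment_injective {P : Type*} [MetricSpace P] [DecidableEq P]
    (k : ℕ) (r : ℝ) (hr : 0 ≤ r)
    (σ : P → Fin k) (c : Fin k → P)
    (hrad : ∀ p : P, dist p (c (σ p)) ≤ r)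
    (C Y : Finset P)
    (hCinj : Set.InjOn σ (C : Set P)) (hYinj : Set.InjOn σ (Y : Set P))
    (Y' : Finset P) (hY'sub : Y' ⊆ Y)
    (C' : Finset P)
    (hC' : ∀ z, z ∈ C' ↔ z ∈ C ∧ ∃ y ∈ Y', dist y z ≤ 2 * r)
    (hdef : C'.card < Y'.card) :
    Set.InjOn σ (((C \ C') ∪ Y' : Finset P) : Set P) ∧
      C.card < ((C \ C') ∪ Y').card ∧ ((C \ C') ∪ Y').card ≤ k := by
  -- cross claim: a point of Y' and a point of C \ C' have different σ
  have cross : ∀ y ∈ Y', ∀ z ∈ C \ C', σ y ≠ σ z := by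
    intro y hy z hz h
    rw [Finset.mem_sdiff] at hz
    apply hz.2
    rw [hC']
    refine ⟨hz.1, y, hy, ?_⟩
    calc dist y z ≤ dist y (c (σ y)) + dist z (c (σ z)) := by
            rw [h]; exact dist_triangle_right _ _ _
      _ ≤ r + r := add_le_add (hrad y) (hrad z)
      _ = 2 * r := by ring
  have hdisj : Disjoint (C \ C') Y' := by
    rw [Finset.disjoint_right]
    intro p hp hp'
    exact cross p hp p hp' rfl
  have hinj : Set.InjOn σ (((C \ C') ∪ Y' : Finset P) : Set P) := by
    intro a ha b hb hab
    simp only [Finset.coe_union, Set.mem_union, Finset.mem_coe,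
      Finset.mem_sdiff] at ha hb
    rcases ha with ha | ha <;> rcases hb with hb | hb
    · exact hCinj (by exact_mod_cast ha.1) (by exact_mod_cast hb.1) hab
    · exact absurd hab.symm (cross b hb a (Finset.mem_sdiff.2 ha))
    · exact absurd hab (cross a ha b (Finset.mem_sdiff.2 hb))
    · exact hYinj (Finset.mem_coe.2 (hY'sub ha)) (Finset.mem_coe.2 (hY'sub hb)) hab
  have hsub : C' ⊆ C := fun z hz => ((hC' z).1 hz).1
  have hcard : ((C \ C') ∪ Y').card = C.card - C'.card + Y'.card := by
    rw [Finset.card_union_of_disjoint hdisj, Finset.card_sdiff_of_subset hsub]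
  refine ⟨hinj, ?_, ?_⟩
  · rw [hcard]
    have := Finset.card_le_card hsub
    omega
  · have := Finset.card_le_card_of_injOn σ (fun a ha => Finset.mem_univ _) hinj
    simpa using this
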